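/- For all n ≥ 5, the graceful chromatic number of the open triangular ladder O(TL_n) equals 7. -/
import Mathlib


/-- A graceful `k`-coloring of `G`: a proper vertex coloring with colors in
`{1, ..., k}` whose induced edge coloring `f*(uv) = |f u - f v|` is a proper
edge coloring. -/
def IsGracefulColoring {V : Type*} (G : SimpleGraph V) (k : ℕ) (f : V → ℕ) : Prop :=
  (∀ v, 1 ≤ f v ∧ f v ≤ k) ∧
  (∀ ⦃u v⦄, G.Adj u v → f u ≠ f v) ∧
  (∀ ⦃u v w⦄, G.Adj u v → G.Adj u w → v ≠ w →
    ((f u : ℤ) - f v).natAbs ≠ ((f u : ℤ) - f w).natAbs)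

/-- The graceful chromatic number: the least `k` admitting a graceful `k`-coloring. -/
noncomputable def gracefulChromaticNumber {V : Type*} (G : SimpleGraph V) : ℕ :=
  sInf {k | ∃ f : V → ℕ, IsGracefulColoring G k f}

/-- The triangular ladder `TL_n`: the closed ladder together with the diagonal
edges `x_i y_{i+1}` (row `0` is `x`, row `1` is `y`). -/
def triangularLadder (n : ℕ) : SimpleGraph (Fin 2 × Fin n) :=
  SimpleGraph.fromRel (fun a b =>
    (a.1 = b.1 ∧ a.2.val + 1 = b.2.val) ∨
    (a.2 = b.2 ∧ a.1 ≠ b.1) ∨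
    (a.1 = 0 ∧ b.1 = 1 ∧ a.2.val + 1 = b.2.val))

/-- The open triangular ladder `O(TL_n)`: `TL_n` with the rungs `x_1 y_1` and
`x_n y_n` removed. -/
def openTriangularLadder (n : ℕ) : SimpleGraph (Fin 2 × Fin n) :=
  SimpleGraph.fromRel (fun a b =>
    (a.1 = b.1 ∧ a.2.val + 1 = b.2.val) ∨
    (a.2 = b.2 ∧ a.1 ≠ b.1 ∧ 0 < a.2.val ∧ a.2.val < n - 1) ∨
    (a.1 = 0 ∧ b.1 = 1 ∧ a.2.val + 1 = b.2.val))

/-! ### Auxiliary material for the proof -/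

/-- The periodic coloring pattern: row `x` gets `1,5,7` and row `y` gets
`3,6,2`, repeating with period `3`. -/
def OTLF (r i : ℕ) : ℕ :=
  if r = 0 then (if i % 3 = 0 then 1 else if i % 3 = 1 then 5 else 7)
  else (if i % 3 = 0 then 3 else if i % 3 = 1 then 6 else 2)

/-- The arithmetic shadow of adjacency in the (open) triangular ladder. -/
def OTLRel (r i s j : ℕ) : Prop :=
  (r = s ∧ (i + 1 = j ∨ j + 1 = i)) ∨ (i = j ∧ r ≠ s) ∨
  (r = 0 ∧ s = 1 ∧ i + 1 = j) ∨ (r = 1 ∧ s = 0 ∧ j + 1 = i)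

set_option maxHeartbeats 1000000 in
lemma OTL_key1 {r i s j : ℕ} (hr : r < 2) (hs : s < 2) (h : OTLRel r i s j) :
    OTLF r i ≠ OTLF s j := by
  unfold OTLRel at h
  unfold OTLF
  interval_cases r <;> interval_cases s <;> (try simp only [reduceIte]) <;>
  rcases h with ⟨a1, a2 | a2⟩ | ⟨a1, a2⟩ | ⟨a1, a2, a3⟩ | ⟨a1, a2, a3⟩ <;>
  split_ifs <;> first | omega | exact False.elim (by assumption)

set_option maxHeartbeats 4000000 in
lemma OTL_key2 {r i s j t k : ℕ} (hr : r < 2) (hs : s < 2) (ht : t < 2)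
    (h1 : OTLRel r i s j) (h2 : OTLRel r i t k) (hne : s ≠ t ∨ j ≠ k) :
    ((OTLF r i : ℤ) - OTLF s j).natAbs ≠ ((OTLF r i : ℤ) - OTLF t k).natAbs := by
  unfold OTLRel at h1 h2
  unfold OTLF
  interval_cases r <;> interval_cases s <;> interval_cases t <;>
    (try simp only [reduceIte]) <;>
  rcases h1 with ⟨a1, a2 | a2⟩ | ⟨a1, a2⟩ | ⟨a1, a2, a3⟩ | ⟨a1, a2, a3⟩ <;>
  rcases h2 with ⟨b1, b2 | b2⟩ | ⟨b1, b2⟩ | ⟨b1, b2, b3⟩ | ⟨b1, b2, b3⟩ <;>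
  first | omega | (split_ifs <;> first | omega | exact False.elim (by assumption))

lemma OTL_adj_rel {n : ℕ} {a b : Fin 2 × Fin n} (h : (openTriangularLadder n).Adj a b) :
    OTLRel a.1.val a.2.val b.1.val b.2.val := by
  rw [openTriangularLadder, SimpleGraph.fromRel_adj] at h
  obtain ⟨hne, h⟩ := h
  unfold OTLRel
  simp only [Prod.ext_iff, Fin.ext_iff, Fin.val_zero, Fin.val_one] at h ⊢
  omega

lemma OTL_adjH {n : ℕ} (r : Fin 2) {i j : Fin n} (h : i.val + 1 = j.val) :
    (openTriangularLadder n).Adj (r, i) (r, j) := by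
  rw [openTriangularLadder, SimpleGraph.fromRel_adj]
  exact ⟨by simp [Prod.ext_iff, Fin.ext_iff]; omega, Or.inl (Or.inl ⟨rfl, h⟩)⟩

lemma OTL_adjD {n : ℕ} {i j : Fin n} (h : i.val + 1 = j.val) :
    (openTriangularLadder n).Adj ((0 : Fin 2), i) ((1 : Fin 2), j) := by
  rw [openTriangularLadder, SimpleGraph.fromRel_adj]
  exact ⟨by simp [Prod.ext_iff, Fin.ext_iff], Or.inl (Or.inr (Or.inr ⟨rfl, rfl, h⟩))⟩

lemma OTL_adjR {n : ℕ} {i : Fin n} (h0 : 0 < i.val) (h1 : i.val < n - 1) :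
    (openTriangularLadder n).Adj ((0 : Fin 2), i) ((1 : Fin 2), i) := by
  rw [openTriangularLadder, SimpleGraph.fromRel_adj]
  exact ⟨by simp [Prod.ext_iff, Fin.ext_iff], Or.inl (Or.inr (Or.inl ⟨rfl, by simp, h0, h1⟩))⟩

/-- A vertex of degree (at least) `4` in a gracefully `6`-colored graph cannot
receive color `3` or `4`. -/
lemma OTL_deg4a {a b1 b2 b3 b4 : ℕ}
    (ha : 1 ≤ a ∧ a ≤ 6) (h1 : 1 ≤ b1 ∧ b1 ≤ 6) (h2 : 1 ≤ b2 ∧ b2 ≤ 6)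
    (h3 : 1 ≤ b3 ∧ b3 ≤ 6) (h4 : 1 ≤ b4 ∧ b4 ≤ 6)
    (e1 : a ≠ b1) (e2 : a ≠ b2) (e3 : a ≠ b3) (e4 : a ≠ b4)
    (p12 : ((a:ℤ)-b1).natAbs ≠ ((a:ℤ)-b2).natAbs)
    (p13 : ((a:ℤ)-b1).natAbs ≠ ((a:ℤ)-b3).natAbs)
    (p14 : ((a:ℤ)-b1).natAbs ≠ ((a:ℤ)-b4).natAbs)
    (p23 : ((a:ℤ)-b2).natAbs ≠ ((a:ℤ)-b3).natAbs)
    (p24 : ((a:ℤ)-b2).natAbs ≠ ((a:ℤ)-b4).natAbs)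
    (p34 : ((a:ℤ)-b3).natAbs ≠ ((a:ℤ)-b4).natAbs) :
    a ≠ 3 ∧ a ≠ 4 := by omega

/-- A vertex of degree `4` all of whose neighbours avoid colors `3` and `4`
is impossible in a gracefully `6`-colored graph. -/
lemma OTL_deg4b {a b1 b2 b3 b4 : ℕ}
    (ha : 1 ≤ a ∧ a ≤ 6) (h1 : 1 ≤ b1 ∧ b1 ≤ 6) (h2 : 1 ≤ b2 ∧ b2 ≤ 6)
    (h3 : 1 ≤ b3 ∧ b3 ≤ 6) (h4 : 1 ≤ b4 ∧ b4 ≤ 6)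
    (q1 : b1 ≠ 3 ∧ b1 ≠ 4) (q2 : b2 ≠ 3 ∧ b2 ≠ 4)
    (q3 : b3 ≠ 3 ∧ b3 ≠ 4) (q4 : b4 ≠ 3 ∧ b4 ≠ 4)
    (e1 : a ≠ b1) (e2 : a ≠ b2) (e3 : a ≠ b3) (e4 : a ≠ b4)
    (p12 : ((a:ℤ)-b1).natAbs ≠ ((a:ℤ)-b2).natAbs)
    (p13 : ((a:ℤ)-b1).natAbs ≠ ((a:ℤ)-b3).natAbs)
    (p14 : ((a:ℤ)-b1).natAbs ≠ ((a:ℤ)-b4).natAbs)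
    (p23 : ((a:ℤ)-b2).natAbs ≠ ((a:ℤ)-b3).natAbs)
    (p24 : ((a:ℤ)-b2).natAbs ≠ ((a:ℤ)-b4).natAbs)
    (p34 : ((a:ℤ)-b3).natAbs ≠ ((a:ℤ)-b4).natAbs) :
    False := by
  have qa : a ≠ 3 ∧ a ≠ 4 :=
    OTL_deg4a ha h1 h2 h3 h4 e1 e2 e3 e4 p12 p13 p14 p23 p24 p34
  obtain ⟨qa3, qa4⟩ := qa
  obtain ⟨ha1, ha2⟩ := ha
  obtain ⟨hb1, hb2⟩ := h1
  interval_cases a <;> [skip; skip; omega; omega; skip; skip] <;>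
    interval_cases b1 <;> omega

lemma OTL_center_ne {n : ℕ} {f : Fin 2 × Fin n → ℕ}
    (hf : IsGracefulColoring (openTriangularLadder n) 6 f)
    {u v1 v2 v3 v4 : Fin 2 × Fin n}
    (h1 : (openTriangularLadder n).Adj u v1) (h2 : (openTriangularLadder n).Adj u v2)
    (h3 : (openTriangularLadder n).Adj u v3) (h4 : (openTriangularLadder n).Adj u v4)
    (d12 : v1 ≠ v2) (d13 : v1 ≠ v3) (d14 : v1 ≠ v4)
    (d23 : v2 ≠ v3) (d24 : v2 ≠ v4) (d34 : v3 ≠ v4) :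
    f u ≠ 3 ∧ f u ≠ 4 := by
  obtain ⟨hb, hp, hg⟩ := hf
  exact OTL_deg4a (hb u) (hb v1) (hb v2) (hb v3) (hb v4)
    (hp h1) (hp h2) (hp h3) (hp h4)
    (hg h1 h2 d12) (hg h1 h3 d13) (hg h1 h4 d14)
    (hg h2 h3 d23) (hg h2 h4 d24) (hg h3 h4 d34)

lemma OTL_center_false {n : ℕ} {f : Fin 2 × Fin n → ℕ}
    (hf : IsGracefulColoring (openTriangularLadder n) 6 f)
    {u v1 v2 v3 v4 : Fin 2 × Fin n}
    (h1 : (openTriangularLadder n).Adj u v1) (h2 : (openTriangularLadder n).Adj u v2)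
    (h3 : (openTriangularLadder n).Adj u v3) (h4 : (openTriangularLadder n).Adj u v4)
    (d12 : v1 ≠ v2) (d13 : v1 ≠ v3) (d14 : v1 ≠ v4)
    (d23 : v2 ≠ v3) (d24 : v2 ≠ v4) (d34 : v3 ≠ v4)
    (q1 : f v1 ≠ 3 ∧ f v1 ≠ 4) (q2 : f v2 ≠ 3 ∧ f v2 ≠ 4)
    (q3 : f v3 ≠ 3 ∧ f v3 ≠ 4) (q4 : f v4 ≠ 3 ∧ f v4 ≠ 4) :
    False := by
  obtain ⟨hb, hp, hg⟩ := hf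
  exact OTL_deg4b (hb u) (hb v1) (hb v2) (hb v3) (hb v4) q1 q2 q3 q4
    (hp h1) (hp h2) (hp h3) (hp h4)
    (hg h1 h2 d12) (hg h1 h3 d13) (hg h1 h4 d14)
    (hg h2 h3 d23) (hg h2 h4 d24) (hg h3 h4 d34)

/-- The open triangular ladder on at least `5` columns admits no graceful
`6`-coloring. -/
lemma OTL_no_six {n : ℕ} (hn : 5 ≤ n) (f : Fin 2 × Fin n → ℕ)
    (hf : IsGracefulColoring (openTriangularLadder n) 6 f) : False := by
  let x : ∀ k : ℕ, k < n → Fin 2 × Fin n := fun k h => ((0 : Fin 2), ⟨k, h⟩)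
  let y : ∀ k : ℕ, k < n → Fin 2 × Fin n := fun k h => ((1 : Fin 2), ⟨k, h⟩)
  have l0 : (0:ℕ) < n := by omega
  have l1 : (1:ℕ) < n := by omega
  have l2 : (2:ℕ) < n := by omega
  have l3 : (3:ℕ) < n := by omega
  have l4 : (4:ℕ) < n := by omega
  -- horizontal adjacencies
  have ax01 : (openTriangularLadder n).Adj (x 0 l0) (x 1 l1) := OTL_adjH 0 rfl
  have ax12 : (openTriangularLadder n).Adj (x 1 l1) (x 2 l2) := OTL_adjH 0 rfl
  have ax23 : (openTriangularLadder n).Adj (x 2 l2) (x 3 l3) := OTL_adjH 0 rfl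
  have ax34 : (openTriangularLadder n).Adj (x 3 l3) (x 4 l4) := OTL_adjH 0 rfl
  have ay01 : (openTriangularLadder n).Adj (y 0 l0) (y 1 l1) := OTL_adjH 1 rfl
  have ay12 : (openTriangularLadder n).Adj (y 1 l1) (y 2 l2) := OTL_adjH 1 rfl
  have ay23 : (openTriangularLadder n).Adj (y 2 l2) (y 3 l3) := OTL_adjH 1 rfl
  have ay34 : (openTriangularLadder n).Adj (y 3 l3) (y 4 l4) := OTL_adjH 1 rfl
  -- diagonal adjacencies
  have ad01 : (openTriangularLadder n).Adj (x 0 l0) (y 1 l1) := OTL_adjD rfl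
  have ad12 : (openTriangularLadder n).Adj (x 1 l1) (y 2 l2) := OTL_adjD rfl
  have ad23 : (openTriangularLadder n).Adj (x 2 l2) (y 3 l3) := OTL_adjD rfl
  have ad34 : (openTriangularLadder n).Adj (x 3 l3) (y 4 l4) := OTL_adjD rfl
  -- rung adjacencies
  have ar1 : (openTriangularLadder n).Adj (x 1 l1) (y 1 l1) :=
    OTL_adjR (by show (0:ℕ) < 1; omega) (by show (1:ℕ) < n - 1; omega)
  have ar2 : (openTriangularLadder n).Adj (x 2 l2) (y 2 l2) :=
    OTL_adjR (by show (0:ℕ) < 2; omega) (by show (2:ℕ) < n - 1; omega)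
  have ar3 : (openTriangularLadder n).Adj (x 3 l3) (y 3 l3) :=
    OTL_adjR (by show (0:ℕ) < 3; omega) (by show (3:ℕ) < n - 1; omega)
  -- the four degree-4 neighbours of x2 avoid colors 3 and 4
  have qx1 : f (x 1 l1) ≠ 3 ∧ f (x 1 l1) ≠ 4 :=
    OTL_center_ne hf ax01.symm ax12 ar1 ad12
      (by simp [x, y, Prod.ext_iff, Fin.ext_iff])
      (by simp [x, y, Prod.ext_iff, Fin.ext_iff])
      (by simp [x, y, Prod.ext_iff, Fin.ext_iff])
      (by simp [x, y, Prod.ext_iff, Fin.ext_iff])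
      (by simp [x, y, Prod.ext_iff, Fin.ext_iff])
      (by simp [x, y, Prod.ext_iff, Fin.ext_iff])
  have qx3 : f (x 3 l3) ≠ 3 ∧ f (x 3 l3) ≠ 4 :=
    OTL_center_ne hf ax23.symm ax34 ar3 ad34
      (by simp [x, y, Prod.ext_iff, Fin.ext_iff])
      (by simp [x, y, Prod.ext_iff, Fin.ext_iff])
      (by simp [x, y, Prod.ext_iff, Fin.ext_iff])
      (by simp [x, y, Prod.ext_iff, Fin.ext_iff])
      (by simp [x, y, Prod.ext_iff, Fin.ext_iff])
      (by simp [x, y, Prod.ext_iff, Fin.ext_iff])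
  have qy2 : f (y 2 l2) ≠ 3 ∧ f (y 2 l2) ≠ 4 :=
    OTL_center_ne hf ay12.symm ay23 ar2.symm ad12.symm
      (by simp [x, y, Prod.ext_iff, Fin.ext_iff])
      (by simp [x, y, Prod.ext_iff, Fin.ext_iff])
      (by simp [x, y, Prod.ext_iff, Fin.ext_iff])
      (by simp [x, y, Prod.ext_iff, Fin.ext_iff])
      (by simp [x, y, Prod.ext_iff, Fin.ext_iff])
      (by simp [x, y, Prod.ext_iff, Fin.ext_iff])
  have qy3 : f (y 3 l3) ≠ 3 ∧ f (y 3 l3) ≠ 4 :=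
    OTL_center_ne hf ay23.symm ay34 ar3.symm ad23.symm
      (by simp [x, y, Prod.ext_iff, Fin.ext_iff])
      (by simp [x, y, Prod.ext_iff, Fin.ext_iff])
      (by simp [x, y, Prod.ext_iff, Fin.ext_iff])
      (by simp [x, y, Prod.ext_iff, Fin.ext_iff])
      (by simp [x, y, Prod.ext_iff, Fin.ext_iff])
      (by simp [x, y, Prod.ext_iff, Fin.ext_iff])
  -- contradiction at x2
  exact OTL_center_false hf ax12.symm ax23 ar2 ad23
      (by simp [x, y, Prod.ext_iff, Fin.ext_iff])
      (by simp [x, y, Prod.ext_iff, Fin.ext_iff])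
      (by simp [x, y, Prod.ext_iff, Fin.ext_iff])
      (by simp [x, y, Prod.ext_iff, Fin.ext_iff])
      (by simp [x, y, Prod.ext_iff, Fin.ext_iff])
      (by simp [x, y, Prod.ext_iff, Fin.ext_iff])
      qx1 qx3 qy2 qy3

/-- The explicit graceful `7`-coloring of the open triangular ladder. -/
lemma OTL_upper {n : ℕ} :
    IsGracefulColoring (openTriangularLadder n) 7 (fun v => OTLF v.1.val v.2.val) := by
  refine ⟨fun v => ?_, fun u v h => ?_, fun u v w h1 h2 hne => ?_⟩
  · dsimp only
    unfold OTLF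
    split_ifs <;> omega
  · exact OTL_key1 u.1.isLt v.1.isLt (OTL_adj_rel h)
  · refine OTL_key2 u.1.isLt v.1.isLt w.1.isLt (OTL_adj_rel h1) (OTL_adj_rel h2) ?_
    by_contra hc
    push_neg at hc
    apply hne
    rw [Prod.ext_iff]
    exact ⟨Fin.ext hc.1, Fin.ext hc.2⟩

theorem gracefulChromaticNumber_openTriangularLadder (n : ℕ) (hn : 5 ≤ n) :
    gracefulChromaticNumber (openTriangularLadder n) = 7 := by
  have h7 : 7 ∈ {k | ∃ f : Fin 2 × Fin n → ℕ, IsGracefulColoring (openTriangularLadder n) k f} :=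
    ⟨_, OTL_upper⟩
  rw [gracefulChromaticNumber]
  apply le_antisymm
  · exact Nat.sInf_le h7
  · by_contra hc
    push_neg at hc
    obtain ⟨f, hf⟩ := Nat.sInf_mem (⟨7, h7⟩ : Set.Nonempty
      {k | ∃ f : Fin 2 × Fin n → ℕ, IsGracefulColoring (openTriangularLadder n) k f})
    exact OTL_no_six hn f
      ⟨fun v => ⟨(hf.1 v).1, le_trans (hf.1 v).2 (by omega)⟩, hf.2.1, hf.2.2⟩
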